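/- Let F be an algebraically closed field, e₁ = (1,0,0), e₂ = (0,1,0), β₈ ∈ F nonzero, and k₁, k₂ ≥ 2. For A ∈ O(F), there exist X, Y ∈ O(F) with A = (0, e₁; 0, 0)·X^{k₁} + (0, e₂; 0, β₈)·Y^{k₂} if and only if the second coordinate of the upper-right vector of A equals β₈^{-1} times the lower-right scalar of A and the third coordinate of the upper-right vector is 0. -/
import Mathlib


/-- Zorn vector matrices: the split octonion algebra over `F`. -/
structure Oct (F : Type*) where
  a : F              -- upper-left scalar η
  b : Fin 3 → F      -- upper-right vector x
  c : Fin 3 → F      -- lower-left vector y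
  d : F              -- lower-right scalar ζ

namespace Oct

variable {F : Type*} [Field F]

/-- standard bilinear form on F^3 -/
def dot (x y : Fin 3 → F) : F := x 0 * y 0 + x 1 * y 1 + x 2 * y 2

/-- cross product on F^3, satisfying ⟨x ∧ y, z⟩ = det(x,y,z) -/
def cross (x y : Fin 3 → F) : Fin 3 → F :=
  ![x 1 * y 2 - x 2 * y 1, x 2 * y 0 - x 0 * y 2, x 0 * y 1 - x 1 * y 0]

instance : Add (Oct F) :=
  ⟨fun A B => ⟨A.a + B.a, A.b + B.b, A.c + B.c, A.d + B.d⟩⟩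

instance : Mul (Oct F) :=
  ⟨fun A B =>
    ⟨A.a * B.a + dot A.b B.c,
     A.a • B.b + B.d • A.b + cross A.c B.c,
     A.d • B.c + B.a • A.c + cross A.b B.b,
     A.d * B.d + dot A.c B.b⟩⟩

instance : SMul F (Oct F) :=
  ⟨fun t A => ⟨t * A.a, t • A.b, t • A.c, t * A.d⟩⟩

instance : One (Oct F) := ⟨⟨1, 0, 0, 1⟩⟩

/-- powers, via A^{n+1} = A · A^n (well-defined by power-associativity) -/
def pow (A : Oct F) : ℕ → Oct F
  | 0 => 1
  | n + 1 => A * pow A n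

/-- octonion conjugation -/
def conj (A : Oct F) : Oct F := ⟨A.d, -A.b, -A.c, A.a⟩

/-- the norm form -/
def norm (A : Oct F) : F := A.a * A.d - dot A.b A.c

end Oct

open Oct

namespace Oct

variable {F : Type*} [Field F]

lemma mul_def (A B : Oct F) : A * B =
    ⟨A.a * B.a + dot A.b B.c,
     A.a • B.b + B.d • A.b + cross A.c B.c,
     A.d • B.c + B.a • A.c + cross A.b B.b,
     A.d * B.d + dot A.c B.b⟩ := rfl

lemma add_def (A B : Oct F) : A + B = ⟨A.a + B.a, A.b + B.b, A.c + B.c, A.d + B.d⟩ := rfl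

lemma one_def : (1 : Oct F) = ⟨1, 0, 0, 1⟩ := rfl

lemma ext' {A B : Oct F} (ha : A.a = B.a) (hb0 : A.b 0 = B.b 0) (hb1 : A.b 1 = B.b 1)
    (hb2 : A.b 2 = B.b 2) (hc0 : A.c 0 = B.c 0) (hc1 : A.c 1 = B.c 1) (hc2 : A.c 2 = B.c 2)
    (hd : A.d = B.d) : A = B := by
  cases A; cases B
  simp only [mk.injEq] at *
  refine ⟨ha, funext fun i => ?_, funext fun i => ?_, hd⟩ <;> fin_cases i <;> assumption

lemma mul_one' (A : Oct F) : A * 1 = A := by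
  apply ext' <;>
    simp [mul_def, one_def, dot, cross, Pi.add_apply, Pi.smul_apply, Matrix.cons_val_zero,
      Matrix.cons_val_one, Matrix.head_cons] <;>
    rfl

lemma pow_idem {X : Oct F} (h : X * X = X) : ∀ k, 1 ≤ k → pow X k = X := by
  intro k hk
  induction k with
  | zero => omega
  | succ n ih =>
    show X * pow X n = X
    rcases Nat.eq_zero_or_pos n with hn | hn
    · subst hn; show X * 1 = X; exact mul_one' X
    · rw [ih hn, h]

end Oct

theorem stmt_16 {F : Type*} [Field F] [IsAlgClosed F] (β₈ : F) (hβ₈ : β₈ ≠ 0)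
    (k₁ k₂ : ℕ) (hk₁ : 2 ≤ k₁) (hk₂ : 2 ≤ k₂) (A : Oct F) :
    (∃ X Y : Oct F,
        A = (⟨0, ![1, 0, 0], 0, 0⟩ : Oct F) * pow X k₁
          + (⟨0, ![0, 1, 0], 0, β₈⟩ : Oct F) * pow Y k₂)
      ↔ (A.b 1 = β₈⁻¹ * A.d ∧ A.b 2 = 0) := by
  constructor
  · rintro ⟨X, Y, rfl⟩
    set Z := pow X k₁
    set W := pow Y k₂
    constructor
    · show _ = β₈⁻¹ * _
      simp [mul_def, add_def, dot, cross, Pi.add_apply, Pi.smul_apply]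
      field_simp
    · simp [mul_def, add_def, dot, cross, Pi.add_apply, Pi.smul_apply]
  · rintro ⟨h1, h2⟩
    set d' := β₈⁻¹ * A.d with hd'
    refine ⟨⟨1 - A.b 0, ![(1 - A.b 0) * A.b 0, A.c 2 + (1 - d') * d', β₈ * (A.a - 1) - A.c 1],
        ![1, 0, 0], A.b 0⟩,
      ⟨1 - d', ![(1 - d') * d', 0, A.c 0 - β₈], ![1, A.a - 1, 0], d'⟩, ?_⟩
    rw [pow_idem ?hx k₁ (by omega), pow_idem ?hy k₂ (by omega)]
    case hx =>
      apply ext' <;>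
        simp [mul_def, dot, cross, Pi.add_apply, Pi.smul_apply] <;> ring
    case hy =>
      apply ext' <;>
        simp [mul_def, dot, cross, Pi.add_apply, Pi.smul_apply] <;> ring
    apply ext' <;>
      simp [mul_def, add_def, dot, cross, Pi.add_apply, Pi.smul_apply, h1, h2, hd'] <;>
      field_simp <;> ring
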